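/- arXiv:2309.09962 — 4 statements merged into one kernel-verified Lean document; each statement's English description precedes it below -/
import Mathlib

section
/- For every real number λ, the group G acts transitively on the set M_{λ,1} = {X ∈ ℝ^{n+2} : Φ(X,X) = λ, Φ(I,X) = 1}: for any X, Y ∈ M_{λ,1} there exists A ∈ G with A X = Y. (Flat-model orbit decomposition: each 'Minkowski slice' M_{λ,σ=1} is a single orbit of the Poincaré subgroup.) -/
/-!
`Y` is reached from `X` by the Eichler transformation
`v ↦ v + Φ(I,v) u - (Φ(u,v) + c Φ(I,v)) I` along `u = Y - X`, which is `Φ`-orthogonal to the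
null vector `I`. It fixes `I`; it is the composite of two transvections, each along a vector
killed by its own linear form, hence has determinant one; and it is an isometry when
`2c = Φ(u,u)`. Since `Φ(X,X) = Φ(Y,Y)`, the choice `c = -Φ(u,X)` satisfies this, and it sends
`X` to `Y`.
-/

/-- The diagonal symmetric bilinear form on `ℝ^m` whose first `k` diagonal
entries are `-1` and the remaining ones are `+1`. -/
def formSig (k m : ℕ) (x y : Fin m → ℝ) : ℝ :=
  ∑ i : Fin m, (if (i : ℕ) < k then -(x i * y i) else x i * y i)

/-- `A` belongs to the 'Poincaré subgroup' of `SL(n+2,ℝ)` determined by the signature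
`(2,n)` form `Φ = formSig 2 (n+2)` and the null vector `I`: it has determinant one,
preserves `Φ`, and fixes `I`. -/
def IsPoincareMat (n : ℕ) (I : Fin (n + 2) → ℝ)
    (A : Matrix (Fin (n + 2)) (Fin (n + 2)) ℝ) : Prop :=
  A.det = 1 ∧
    (∀ x y : Fin (n + 2) → ℝ,
      formSig 2 (n + 2) (A.mulVec x) (A.mulVec y) = formSig 2 (n + 2) x y) ∧
    A.mulVec I = I

/-- The set `M_{λ,s} = {X : Φ(X,X) = λ, Φ(I,X) = s, X ∉ ℝ·I}`. -/
def Mset (n : ℕ) (I : Fin (n + 2) → ℝ) (lam s : ℝ) : Set (Fin (n + 2) → ℝ) :=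
  {X | formSig 2 (n + 2) X X = lam ∧ formSig 2 (n + 2) I X = s ∧ ¬ ∃ c : ℝ, X = c • I}

open LinearMap (BilinForm transvection)

namespace LinearMap.BilinForm

variable {R V : Type*} [CommRing R] [AddCommGroup V] [Module R V]
  {B : BilinForm R V} {e u : V} {c : R}

def eichlerTransform (B : BilinForm R V) (e u : V) (c : R) : V →ₗ[R] V :=
  transvection (B e) (u - c • e) ∘ₗ transvection (-B u) e

lemma eichlerTransform_apply (he : B e e = 0) (v : V) :
    B.eichlerTransform e u c v = v + B e v • u - (B u v + c * B e v) • e := by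
  simp only [eichlerTransform, LinearMap.comp_apply, transvection.apply, map_add, map_smul,
    LinearMap.neg_apply, he]
  module

lemma eichlerTransform_apply_self (he : B e e = 0) (hue : B u e = 0) :
    B.eichlerTransform e u c e = e := by
  simp [eichlerTransform_apply he, he, hue]

lemma det_eichlerTransform [Module.Free R V] [Module.Finite R V]
    (he : B e e = 0) (heu : B e u = 0) (hue : B u e = 0) :
    LinearMap.det (B.eichlerTransform e u c) = 1 := by
  simp [eichlerTransform, map_sub, heu, he, hue]

lemma eichlerTransform_isometry (hB : B.IsSymm) (he : B e e = 0) (heu : B e u = 0)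
    (hc : 2 * c = B u u) (v w : V) :
    B (B.eichlerTransform e u c v) (B.eichlerTransform e u c w) = B v w := by
  have hue : B u e = 0 := by rw [hB.eq, heu]
  simp only [eichlerTransform_apply he, map_add, map_sub, map_smul, LinearMap.add_apply,
    LinearMap.sub_apply, LinearMap.smul_apply, smul_eq_mul, he, heu, hue]
  rw [hB.eq v e, hB.eq v u]
  linear_combination (-(B e v * B e w)) * hc

lemma eichlerTransform_sub_apply_eq (he : B e e = 0) {x y : V} (hx : B e x = 1) :
    B.eichlerTransform e (y - x) (-B (y - x) x) x = y := by
  simp [eichlerTransform_apply he, hx]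

theorem exists_isometry_det_eq_one_fixing_apply_eq [Module.Free R V] [Module.Finite R V]
    (hB : B.IsSymm) (he : B e e = 0) {x y : V} (hx : B e x = 1) (hy : B e y = 1)
    (hxy : B x x = B y y) :
    ∃ f : V →ₗ[R] V, LinearMap.det f = 1 ∧ (∀ v w, B (f v) (f w) = B v w) ∧
      f e = e ∧ f x = y := by
  have heu : B e (y - x) = 0 := by rw [map_sub, hx, hy, sub_self]
  have hue : B (y - x) e = 0 := by rw [hB.eq, heu]
  have hc : 2 * -B (y - x) x = B (y - x) (y - x) := by
    simp only [map_sub, LinearMap.sub_apply, hxy, hB.eq x y]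
    ring
  exact ⟨_, det_eichlerTransform he heu hue, eichlerTransform_isometry hB he heu hc,
    eichlerTransform_apply_self he hue, eichlerTransform_sub_apply_eq he hx⟩

end LinearMap.BilinForm

def formSigBilin (k m : ℕ) : BilinForm ℝ (Fin m → ℝ) :=
  Matrix.toBilin' (Matrix.diagonal fun i => if (i : ℕ) < k then -1 else 1)

lemma formSigBilin_apply (k m : ℕ) (x y : Fin m → ℝ) :
    formSigBilin k m x y = formSig k m x y := by
  simp only [formSigBilin, Matrix.toBilin'_apply', Matrix.mulVec_diagonal, dotProduct, formSig]
  refine Finset.sum_congr rfl fun i _ => ?_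
  split_ifs <;> ring

lemma formSigBilin_isSymm (k m : ℕ) : (formSigBilin k m).IsSymm :=
  ⟨fun x y => by
    simp only [formSigBilin_apply, formSig]
    exact Finset.sum_congr rfl fun i _ => by split_ifs <;> ring⟩

theorem poincare_transitive_on_minkowski_slice_general
    (n : ℕ) (I : Fin (n + 2) → ℝ)
    (hII : formSig 2 (n + 2) I I = 0) (lam : ℝ)
    (X Y : Fin (n + 2) → ℝ) (hX : X ∈ Mset n I lam 1) (hY : Y ∈ Mset n I lam 1) :
    ∃ A : Matrix (Fin (n + 2)) (Fin (n + 2)) ℝ, IsPoincareMat n I A ∧ A.mulVec X = Y := by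
  obtain ⟨hXX, hIX, -⟩ := hX
  obtain ⟨hYY, hIY, -⟩ := hY
  simp only [← formSigBilin_apply] at hII hIX hIY hXX hYY
  obtain ⟨f, hdet, hiso, hfI, hfX⟩ := BilinForm.exists_isometry_det_eq_one_fixing_apply_eq
    (formSigBilin_isSymm 2 (n + 2)) hII hIX hIY (hXX.trans hYY.symm)
  refine ⟨LinearMap.toMatrix' f, ⟨?_, fun v w => ?_, ?_⟩, ?_⟩
  · rwa [LinearMap.det_toMatrix']
  · simpa only [LinearMap.toMatrix'_mulVec, formSigBilin_apply] using hiso v w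
  · rwa [LinearMap.toMatrix'_mulVec]
  · rwa [LinearMap.toMatrix'_mulVec]

/-- For every `λ ∈ ℝ`, the Poincaré subgroup acts transitively on the Minkowski slice
`M_{λ,1}` of the flat model. -/
theorem poincare_transitive_on_minkowski_slice
    (n : ℕ) (hn : 2 ≤ n) (I : Fin (n + 2) → ℝ) (hI : I ≠ 0)
    (hII : formSig 2 (n + 2) I I = 0) (lam : ℝ)
    (X Y : Fin (n + 2) → ℝ) (hX : X ∈ Mset n I lam 1) (hY : Y ∈ Mset n I lam 1) :
    ∃ A : Matrix (Fin (n + 2)) (Fin (n + 2)) ℝ, IsPoincareMat n I A ∧ A.mulVec X = Y :=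
  poincare_transitive_on_minkowski_slice_general n I hII lam X Y hX hY
end

section
/- The group G acts transitively on the set M_{1,0} = {X ∈ ℝ^{n+2} : Φ(X,X) = 1, Φ(I,X) = 0, X ∉ ℝ·I}: for any X, Y ∈ M_{1,0} there exists A ∈ G with A X = Y. (Flat-model orbit decomposition: the 'Spi' boundary piece M_{1,0} is a single orbit of the Poincaré subgroup.) -/
/-!
Products of two reflections in non-isotropic vectors orthogonal to `I` lie in `G`: they
preserve `Φ`, fix `I` and have determinant `(-1)² = 1`. Given unit vectors `X, Y ⊥ I`, if
`X + Y` is non-isotropic, the reflection in `X + Y` sends `X` to `-Y`, and the reflection in `Y`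
then sends `-Y` to `Y`. Otherwise `Φ(X - Y, X - Y) = 4 - Φ(X + Y, X + Y) = 4`, the reflection in
`X - Y` sends `X` to `Y`, and we follow it by the reflection in a non-isotropic `w ⊥ I, Y`. Such
a `w` exists once `dim ≥ 4`: if `W = {I, Y}^⊥` were totally isotropic, then
`W ⊆ W^⊥ = span {I, Y}`, and comparing dimensions forces `W = span {I, Y} ∋ Y`, contradicting
`Φ(Y, Y) = 1`.
-/

theorem Module.det_reflection {R M : Type*} [CommRing R] [AddCommGroup M] [Module R M]
    [Module.Free R M] [Module.Finite R M] {x : M} {f : Module.Dual R M} (h : f x = 2) :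
    LinearMap.det (Module.reflection h : M →ₗ[R] M) = -1 := by
  have : (Module.reflection h : M →ₗ[R] M) = LinearMap.transvection (-f) x := by
    ext y
    simp [Module.reflection_apply, LinearMap.transvection.apply, sub_eq_add_neg]
  rw [this, LinearMap.transvection.det, LinearMap.neg_apply, h]
  norm_num

namespace LinearMap.BilinForm

variable {K V : Type*} [Field K] [AddCommGroup V] [Module K V]

noncomputable def reflection (B : LinearMap.BilinForm K V) {w : V} (hw : B w w ≠ 0) :
    V ≃ₗ[K] V :=
  Module.reflection (f := (2 / B w w) • B w) (x := w) (by simp [hw])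

variable {B : LinearMap.BilinForm K V} {w : V}

theorem reflection_apply (hw : B w w ≠ 0) (x : V) :
    B.reflection hw x = x - (2 / B w w * B w x) • w := by
  simp [reflection, Module.reflection_apply]

theorem reflection_apply_self (hw : B w w ≠ 0) : B.reflection hw w = -w :=
  Module.reflection_apply_self _

theorem reflection_apply_of_apply_eq_zero (hw : B w w ≠ 0) {x : V} (hx : B w x = 0) :
    B.reflection hw x = x := by
  rw [reflection_apply, hx, mul_zero, zero_smul, sub_zero]

theorem apply_reflection_reflection (hB : B.IsSymm) (hw : B w w ≠ 0) (x y : V) :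
    B (B.reflection hw x) (B.reflection hw y) = B x y := by
  simp only [reflection_apply, map_sub, map_smul, LinearMap.sub_apply, LinearMap.smul_apply,
    smul_eq_mul, hB.eq x w]
  field_simp
  ring

theorem reflection_sub_apply (hB : B.IsSymm) {u v : V} (huv : B u u = B v v)
    (h : B (u - v) (u - v) ≠ 0) : B.reflection h u = v := by
  have h2 : B (u - v) (u - v) = 2 * B (u - v) u := by
    simp only [map_sub, LinearMap.sub_apply, hB.eq u v]
    rw [huv]
    ring
  rw [h2] at h
  rw [reflection_apply, h2, div_mul_eq_div_div, div_mul_cancel₀ _ (right_ne_zero_of_mul h),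
    div_self (left_ne_zero_of_mul h), one_smul, sub_sub_cancel]

theorem reflection_add_apply (hB : B.IsSymm) {u v : V} (huv : B u u = B v v)
    (h : B (u + v) (u + v) ≠ 0) : B.reflection h u = -v := by
  have h2 : B (u + v) (u + v) = 2 * B (u + v) u := by
    simp only [map_add, LinearMap.add_apply, hB.eq u v]
    rw [huv]
    ring
  rw [h2] at h
  rw [reflection_apply, h2, div_mul_eq_div_div, div_mul_cancel₀ _ (right_ne_zero_of_mul h),
    div_self (left_ne_zero_of_mul h), one_smul, sub_add_cancel_left]

theorem det_reflection [FiniteDimensional K V] (hw : B w w ≠ 0) :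
    LinearMap.det (B.reflection hw : V →ₗ[K] V) = -1 :=
  Module.det_reflection _

theorem le_orthogonal_self_of_forall_apply_self_eq_zero [Invertible (2 : K)] (hB : B.IsSymm)
    {W : Submodule K V} (hW : ∀ w ∈ W, B w w = 0) : W ≤ B.orthogonal W := by
  intro x hx
  rw [mem_orthogonal_iff]
  intro y hy
  by_contra hxy
  have hsymm : LinearMap.IsSymm (B.restrict W) := isSymm_iff.mp ⟨fun a b => hB.eq a b⟩
  obtain ⟨⟨z, hz⟩, hzz⟩ := exists_bilinForm_self_ne_zero (B := B.restrict W)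
    (fun h => hxy (by simpa using congr($h ⟨y, hy⟩ ⟨x, hx⟩))) hsymm
  exact hzz (hW z hz)

theorem exists_orthogonal_apply_self_ne_zero [Invertible (2 : K)] [FiniteDimensional K V]
    (hB : B.IsSymm) (hB' : B.Nondegenerate) (hV : 4 ≤ Module.finrank K V) (u v : V)
    (hv : B v v ≠ 0) : ∃ w, B u w = 0 ∧ B v w = 0 ∧ B w w ≠ 0 := by
  set U := Submodule.span K {u, v}
  set W := B.orthogonal U
  have huU : u ∈ U := Submodule.subset_span (by simp)
  have hvU : v ∈ U := Submodule.subset_span (by simp)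
  by_contra! hiso
  have hWU : W ≤ U := by
    have := le_orthogonal_self_of_forall_apply_self_eq_zero (W := W) hB
      fun w hw => hiso w (hw u huU) (hw v hvU)
    rwa [orthogonal_orthogonal hB' hB.isRefl] at this
  have hU : Module.finrank K U ≤ 2 := by
    classical
    exact (finrank_span_le_card (R := K) ({u, v} : Set V)).trans
      (by simpa using Finset.card_insert_le u {v})
  have hUW : U = W := by
    refine (Submodule.eq_of_le_of_finrank_le hWU ?_).symm
    rw [finrank_orthogonal hB']
    omega
  exact hv ((hUW ▸ hvU : v ∈ W) v hvU)

end LinearMap.BilinForm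

open Matrix LinearMap.BilinForm

noncomputable def sigForm (k m : ℕ) : LinearMap.BilinForm ℝ (Fin m → ℝ) :=
  toLinearMap₂' ℝ (diagonal fun i : Fin m => if (i : ℕ) < k then -1 else 1)

theorem sigForm_apply (k m : ℕ) (x y : Fin m → ℝ) : sigForm k m x y = formSig k m x y := by
  simp only [sigForm, toLinearMap₂'_apply', mulVec_diagonal, dotProduct, formSig]
  refine Finset.sum_congr rfl fun i _ => ?_
  split_ifs <;> ring

theorem sigForm_isSymm (k m : ℕ) : (sigForm k m).IsSymm :=
  ⟨fun x y => by simp only [sigForm_apply, formSig, mul_comm (x _)]⟩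

theorem sigForm_nondegenerate (k m : ℕ) : (sigForm k m).Nondegenerate := by
  refine LinearMap.nondegenerate_toLinearMap₂'_iff_det_ne_zero.mpr ?_
  rw [det_diagonal]
  exact Finset.prod_ne_zero_iff.mpr fun i _ => by split_ifs <;> norm_num

theorem isPoincareMat_toMatrix' {n : ℕ} {I : Fin (n + 2) → ℝ}
    {f : (Fin (n + 2) → ℝ) →ₗ[ℝ] Fin (n + 2) → ℝ} (hdet : LinearMap.det f = 1)
    (hf : ∀ x y, sigForm 2 (n + 2) (f x) (f y) = sigForm 2 (n + 2) x y) (hI : f I = I) :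
    IsPoincareMat n I (LinearMap.toMatrix' f) := by
  simp only [IsPoincareMat, LinearMap.det_toMatrix', LinearMap.toMatrix'_mulVec, ← sigForm_apply]
  exact ⟨hdet, hf, hI⟩

theorem isPoincareMat_toMatrix'_reflection_comp {n : ℕ} {I u v : Fin (n + 2) → ℝ}
    (hu : sigForm 2 (n + 2) u u ≠ 0) (hv : sigForm 2 (n + 2) v v ≠ 0)
    (huI : sigForm 2 (n + 2) u I = 0) (hvI : sigForm 2 (n + 2) v I = 0) :
    IsPoincareMat n I (LinearMap.toMatrix'
      ((sigForm 2 (n + 2)).reflection hu ∘ₗ ((sigForm 2 (n + 2)).reflection hv).toLinearMap)) := by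
  refine isPoincareMat_toMatrix' ?_ (fun x y => ?_) ?_
  · rw [LinearMap.det_comp, det_reflection, det_reflection]
    norm_num
  · simp only [LinearMap.comp_apply, LinearEquiv.coe_coe,
      apply_reflection_reflection (sigForm_isSymm 2 (n + 2))]
  · simp only [LinearMap.comp_apply, LinearEquiv.coe_coe,
      reflection_apply_of_apply_eq_zero _ huI, reflection_apply_of_apply_eq_zero _ hvI]

theorem poincare_transitive_on_Spi_general
    (n : ℕ) (hn : 2 ≤ n) (I : Fin (n + 2) → ℝ)
    (X Y : Fin (n + 2) → ℝ) (hX : X ∈ Mset n I 1 0) (hY : Y ∈ Mset n I 1 0) :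
    ∃ A : Matrix (Fin (n + 2)) (Fin (n + 2)) ℝ, IsPoincareMat n I A ∧ A.mulVec X = Y := by
  obtain ⟨hXX, hIX, -⟩ := hX
  obtain ⟨hYY, hIY, -⟩ := hY
  have hΦ := sigForm_isSymm 2 (n + 2)
  rw [← sigForm_apply] at hXX hYY
  rw [← sigForm_apply, hΦ.eq] at hIX hIY
  set Φ := sigForm 2 (n + 2)
  suffices ∃ (u v : Fin (n + 2) → ℝ) (hu : Φ u u ≠ 0) (hv : Φ v v ≠ 0),
      Φ u I = 0 ∧ Φ v I = 0 ∧ Φ.reflection hu (Φ.reflection hv X) = Y by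
    obtain ⟨u, v, hu, hv, huI, hvI, hXY⟩ := this
    exact ⟨_, isPoincareMat_toMatrix'_reflection_comp hu hv huI hvI, by simpa using hXY⟩
  have hY0 : Φ Y Y ≠ 0 := by rw [hYY]; exact one_ne_zero
  by_cases hXY : Φ (X + Y) (X + Y) = 0
  · have hsub : Φ (X - Y) (X - Y) ≠ 0 := by
      simp only [map_add, map_sub, LinearMap.add_apply, LinearMap.sub_apply, hΦ.eq Y X] at hXY ⊢
      linarith
    obtain ⟨w, hIw, hYw, hw⟩ := exists_orthogonal_apply_self_ne_zero hΦ
      (sigForm_nondegenerate 2 (n + 2)) (by rw [Module.finrank_fin_fun]; omega) I Y hY0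
    refine ⟨w, X - Y, hw, hsub, hΦ.eq I w ▸ hIw, by simp [hIX, hIY], ?_⟩
    rw [reflection_sub_apply hΦ (hXX.trans hYY.symm),
      reflection_apply_of_apply_eq_zero _ (hΦ.eq Y w ▸ hYw)]
  · refine ⟨Y, X + Y, hY0, hXY, hIY, by simp [hIX, hIY], ?_⟩
    rw [reflection_add_apply hΦ (hXX.trans hYY.symm), map_neg, reflection_apply_self, neg_neg]

/-- The Poincaré subgroup acts transitively on the flat-model boundary piece
`Spi = M_{1,0}`. -/
theorem poincare_transitive_on_Spi
    (n : ℕ) (hn : 2 ≤ n) (I : Fin (n + 2) → ℝ) (hI : I ≠ 0)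
    (hII : formSig 2 (n + 2) I I = 0)
    (X Y : Fin (n + 2) → ℝ) (hX : X ∈ Mset n I 1 0) (hY : Y ∈ Mset n I 1 0) :
    ∃ A : Matrix (Fin (n + 2)) (Fin (n + 2)) ℝ, IsPoincareMat n I A ∧ A.mulVec X = Y :=
  poincare_transitive_on_Spi_general n hn I X Y hX hY
end

section
/- The group G is isomorphic to the Poincaré group ISO(1,n−1): there is a group isomorphism between G and the semidirect product of the additive group ℝ^n by H = {B ∈ GL(n,ℝ) : η(Bu,Bv) = η(u,v) for all u,v ∈ ℝ^n, det B = 1}, where H acts on ℝ^n by the standard linear action (matrix–vector multiplication). -/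
/-- The group of linear automorphisms of `ℝ^m` with determinant `1` preserving the
bilinear form `formSig k m` (of signature `(k, m-k)`), realized as a subgroup of the
group of invertible `m × m` real matrices. -/
def specialIsometry (k m : ℕ) : Subgroup (Matrix (Fin m) (Fin m) ℝ)ˣ where
  carrier := {A | ((A : Matrix (Fin m) (Fin m) ℝ)).det = 1 ∧
    ∀ x y : Fin m → ℝ,
      formSig k m ((A : Matrix (Fin m) (Fin m) ℝ).mulVec x)
        ((A : Matrix (Fin m) (Fin m) ℝ).mulVec y) = formSig k m x y}
  one_mem' := by
    refine ⟨by simp, fun x y => by simp⟩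
  mul_mem' := by
    intro a b ha hb
    obtain ⟨had, haf⟩ := ha
    obtain ⟨hbd, hbf⟩ := hb
    refine ⟨by rw [Units.val_mul, Matrix.det_mul, had, hbd, mul_one], fun x y => ?_⟩
    rw [Units.val_mul, ← Matrix.mulVec_mulVec, ← Matrix.mulVec_mulVec, haf, hbf]
  inv_mem' := by
    intro a ha
    obtain ⟨had, haf⟩ := ha
    have hinv : (↑a⁻¹ : Matrix (Fin m) (Fin m) ℝ) * (↑a : Matrix (Fin m) (Fin m) ℝ) = 1 := a.inv_mul
    refine ⟨?_, fun x y => ?_⟩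
    · have h := congrArg Matrix.det hinv
      rw [Matrix.det_mul, had, mul_one, Matrix.det_one] at h
      exact h
    · have hx : ∀ v : Fin m → ℝ,
          (↑a : Matrix (Fin m) (Fin m) ℝ).mulVec
            ((↑a⁻¹ : Matrix (Fin m) (Fin m) ℝ).mulVec v) = v := by
        intro v
        rw [Matrix.mulVec_mulVec, a.mul_inv, Matrix.one_mulVec]
      calc formSig k m ((↑a⁻¹ : Matrix (Fin m) (Fin m) ℝ).mulVec x)
              ((↑a⁻¹ : Matrix (Fin m) (Fin m) ℝ).mulVec y)
          = formSig k m
              ((↑a : Matrix (Fin m) (Fin m) ℝ).mulVec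
                ((↑a⁻¹ : Matrix (Fin m) (Fin m) ℝ).mulVec x))
              ((↑a : Matrix (Fin m) (Fin m) ℝ).mulVec
                ((↑a⁻¹ : Matrix (Fin m) (Fin m) ℝ).mulVec y)) := (haf _ _).symm
        _ = formSig k m x y := by rw [hx, hx]

/-- The subgroup of invertible `m × m` real matrices fixing a given vector `v`. -/
def vecStab (m : ℕ) (v : Fin m → ℝ) : Subgroup (Matrix (Fin m) (Fin m) ℝ)ˣ where
  carrier := {A | (A : Matrix (Fin m) (Fin m) ℝ).mulVec v = v}
  one_mem' := by simp
  mul_mem' := by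
    intro a b ha hb
    show ((a * b : (Matrix (Fin m) (Fin m) ℝ)ˣ) : Matrix (Fin m) (Fin m) ℝ).mulVec v = v
    rw [Units.val_mul, ← Matrix.mulVec_mulVec, hb, ha]
  inv_mem' := by
    intro a ha
    show ((a⁻¹ : (Matrix (Fin m) (Fin m) ℝ)ˣ) : Matrix (Fin m) (Fin m) ℝ).mulVec v = v
    conv_lhs => rw [← ha]
    rw [Matrix.mulVec_mulVec, a.inv_mul, Matrix.one_mulVec]

/-- The 'Poincaré subgroup' of `SL(n+2,ℝ)` determined by the signature `(2,n)` form
`formSig 2 (n+2)` and the null vector `I`. -/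
def poincareGroup (n : ℕ) (I : Fin (n + 2) → ℝ) :
    Subgroup (Matrix (Fin (n + 2)) (Fin (n + 2)) ℝ)ˣ :=
  specialIsometry 2 (n + 2) ⊓ vecStab (n + 2) I

/-- The multiplicative automorphism of `Multiplicative ℝ^m` induced by an invertible
matrix acting by matrix–vector multiplication. -/
def mulVecMulAut {m : ℕ} (A : (Matrix (Fin m) (Fin m) ℝ)ˣ) :
    Multiplicative (Fin m → ℝ) ≃* Multiplicative (Fin m → ℝ) where
  toFun v := Multiplicative.ofAdd
    ((A : Matrix (Fin m) (Fin m) ℝ).mulVec (Multiplicative.toAdd v))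
  invFun v := Multiplicative.ofAdd
    ((↑A⁻¹ : Matrix (Fin m) (Fin m) ℝ).mulVec (Multiplicative.toAdd v))
  left_inv v := by
    simp only [toAdd_ofAdd, Matrix.mulVec_mulVec, Units.inv_mul, Matrix.one_mulVec,
      ofAdd_toAdd]
  right_inv v := by
    simp only [toAdd_ofAdd, Matrix.mulVec_mulVec, Units.mul_inv, Matrix.one_mulVec,
      ofAdd_toAdd]
  map_mul' u v := by
    simp only [toAdd_mul, Matrix.mulVec_add, ofAdd_add]

/-- A subgroup of invertible `m × m` real matrices acts on the (additive, written
multiplicatively) translation group `ℝ^m` by matrix–vector multiplication. -/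
def subgroupMulVecHom {m : ℕ} (S : Subgroup (Matrix (Fin m) (Fin m) ℝ)ˣ) :
    S →* MulAut (Multiplicative (Fin m → ℝ)) where
  toFun A := mulVecMulAut (A : (Matrix (Fin m) (Fin m) ℝ)ˣ)
  map_one' := by
    ext v
    simp [mulVecMulAut]
  map_mul' a b := by
    ext v
    simp [mulVecMulAut, MulAut.mul_apply, Matrix.mulVec_mulVec]

/-!
Rescaling `I` does not change its stabiliser, so we may assume that its components `p ∈ ℝ²` and
`q ∈ ℝⁿ` on the negative and positive definite coordinates are unit vectors (`Φ(I,I) = 0` forces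
`|p| = |q|`, and `I ≠ 0` makes this nonzero). A block rotation in `SO(2) × SO(n)`, each factor a
product of two Householder reflections, carries the null vector `u = e₀ + e₂` to `I`, so `G` is
conjugate in `SO(2,n)` to the stabiliser of `u`.

In coordinates `ℝ² ⊕ ℝⁿ`, where `e₀, e₂` span a hyperbolic plane and the remaining coordinates
carry `η`, an isometry fixing `u` also fixes the covector `Φ(u, ·)`; together with the isometry
equations this forces it to be `T_a · diag(1, B)` with `T_a` a null rotation and `B` an isometry
of `η`, and then its determinant is `det B`. Conjugation by `diag(1, B)` sends `T_a` to `T_{B a}`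
and `T_a T_b = T_{a+b}`, which is the semidirect product structure of `ℝⁿ ⋊ SO(1,n-1)`.
-/

open Matrix
open scoped Pointwise

namespace PoincareSubgroup

def signMatrix (k m : ℕ) : Matrix (Fin m) (Fin m) ℝ :=
  diagonal fun i => if (i : ℕ) < k then -1 else 1

lemma isSymm_signMatrix (k m : ℕ) : (signMatrix k m).IsSymm :=
  isSymm_diagonal _

lemma formSig_eq_dotProduct (k m : ℕ) (x y : Fin m → ℝ) :
    formSig k m x y = x ⬝ᵥ signMatrix k m *ᵥ y := by
  simp only [formSig, signMatrix, mulVec_diagonal, dotProduct]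
  refine Finset.sum_congr rfl fun i _ => ?_
  split_ifs <;> ring

lemma forall_formSig_mulVec_iff (k m : ℕ) (A : Matrix (Fin m) (Fin m) ℝ) :
    (∀ x y, formSig k m (A *ᵥ x) (A *ᵥ y) = formSig k m x y) ↔
      Aᵀ * signMatrix k m * A = signMatrix k m := by
  have h x y : formSig k m (A *ᵥ x) (A *ᵥ y) = x ⬝ᵥ (Aᵀ * signMatrix k m * A) *ᵥ y := by
    rw [formSig_eq_dotProduct, ← vecMul_transpose, ← dotProduct_mulVec, mulVec_mulVec,
      mulVec_mulVec, Matrix.mul_assoc]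
  simp only [h, formSig_eq_dotProduct, ← toBilin'_apply']
  exact ⟨fun h => ext fun i j => by
    rw [← toBilin'_single (Aᵀ * signMatrix k m * A), h, toBilin'_single], fun h x y => by rw [h]⟩

lemma mem_specialIsometry_iff {k m : ℕ} {A : (Matrix (Fin m) (Fin m) ℝ)ˣ} :
    A ∈ specialIsometry k m ↔
      (A : Matrix (Fin m) (Fin m) ℝ).det = 1 ∧
        (A : Matrix (Fin m) (Fin m) ℝ)ᵀ * signMatrix k m * A = signMatrix k m :=
  and_congr_right' (forall_formSig_mulVec_iff k m A)

lemma exists_mem_specialIsometry_coe_eq {k m : ℕ} {M : Matrix (Fin m) (Fin m) ℝ}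
    (hdet : M.det = 1) (hM : Mᵀ * signMatrix k m * M = signMatrix k m) :
    ∃ g ∈ specialIsometry k m, (g : Matrix (Fin m) (Fin m) ℝ) = M :=
  ⟨nonsingInvUnit M (hdet ▸ isUnit_one), mem_specialIsometry_iff.mpr ⟨hdet, hM⟩, rfl⟩

lemma isometry_mul {κ : Type*} [Fintype κ] {F X Y : Matrix κ κ ℝ} (hX : Xᵀ * F * X = F)
    (hY : Yᵀ * F * Y = F) : (X * Y)ᵀ * F * (X * Y) = F := by
  rw [transpose_mul, show Yᵀ * Xᵀ * F * (X * Y) = Yᵀ * (Xᵀ * F * X) * Y by noncomm_ring, hX, hY]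

lemma transpose_reindex_mul_mul {κ ι : Type*} [Fintype κ] [Fintype ι] (e : κ ≃ ι)
    (A Q : Matrix κ κ ℝ) :
    (reindex e e A)ᵀ * reindex e e Q * reindex e e A = reindex e e (Aᵀ * Q * A) := by
  simp only [reindex_apply, transpose_submatrix, submatrix_mul_equiv]

/-! ### Householder reflections -/

section Householder

variable {ι : Type*} [Fintype ι] [DecidableEq ι]

noncomputable def householder (v : ι → ℝ) : Matrix ι ι ℝ :=
  1 - (2 / (v ⬝ᵥ v)) • vecMulVec v v

lemma householder_mem_orthogonalGroup {v : ι → ℝ} (hv : v ≠ 0) :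
    householder v ∈ orthogonalGroup ι ℝ := by
  have hvv : v ⬝ᵥ v ≠ 0 := fun h => hv (dotProduct_self_eq_zero.mp h)
  rw [mem_orthogonalGroup_iff', householder]
  simp only [transpose_sub, transpose_one, transpose_smul, transpose_vecMulVec, Matrix.sub_mul,
    Matrix.mul_sub, Matrix.one_mul, Matrix.mul_one, Matrix.smul_mul, Matrix.mul_smul,
    vecMulVec_mul_vecMulVec, vecMulVec_smul, smul_smul]
  rw [div_mul_cancel₀ _ hvv]
  module

lemma det_householder {v : ι → ℝ} (hv : v ≠ 0) : (householder v).det = -1 := by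
  have hvv : v ⬝ᵥ v ≠ 0 := fun h => hv (dotProduct_self_eq_zero.mp h)
  rw [householder, sub_eq_add_neg, ← neg_smul, ← smul_vecMulVec, vecMulVec_eq Unit,
    det_one_add_replicateCol_mul_replicateRow, dotProduct_smul, smul_eq_mul]
  field_simp
  ring

lemma householder_mulVec (v x : ι → ℝ) :
    householder v *ᵥ x = x - ((2 / (v ⬝ᵥ v)) * (v ⬝ᵥ x)) • v := by
  rw [householder, sub_mulVec, one_mulVec, smul_mulVec, vecMulVec_mulVec, op_smul_eq_smul,
    smul_smul]

lemma householder_mulVec_of_dotProduct_eq_zero {v x : ι → ℝ} (h : v ⬝ᵥ x = 0) :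
    householder v *ᵥ x = x := by
  rw [householder_mulVec, h, mul_zero, zero_smul, sub_zero]

lemma householder_sub_mulVec {p q : ι → ℝ} (h : p ⬝ᵥ p = q ⬝ᵥ q) (hpq : p ≠ q) :
    householder (q - p) *ᵥ p = q := by
  have hne : (q - p) ⬝ᵥ (q - p) ≠ 0 := fun h₀ =>
    hpq (sub_eq_zero.mp (dotProduct_self_eq_zero.mp h₀)).symm
  have key : 2 / ((q - p) ⬝ᵥ (q - p)) * ((q - p) ⬝ᵥ p) = -1 := by
    rw [div_mul_eq_mul_div, div_eq_iff hne]
    simp only [sub_dotProduct, dotProduct_sub, dotProduct_comm q p]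
    linarith
  rw [householder_mulVec, key, neg_one_smul, sub_neg_eq_add, add_sub_cancel]

lemma exists_mem_specialOrthogonalGroup_mulVec_single [Nontrivial ι] (i : ι) {q : ι → ℝ}
    (hq : q ⬝ᵥ q = 1) : ∃ T ∈ specialOrthogonalGroup ι ℝ, T *ᵥ Pi.single i 1 = q := by
  rcases eq_or_ne (Pi.single i 1) q with h | h
  · exact ⟨1, one_mem _, by rw [one_mulVec, h]⟩
  obtain ⟨j, hji⟩ := exists_ne i
  have hj : (Pi.single j 1 : ι → ℝ) ≠ 0 := by simp
  have hqi : q - Pi.single i 1 ≠ 0 := sub_ne_zero.mpr h.symm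
  -- The second reflection fixes `eᵢ` and only corrects the determinant.
  refine ⟨householder (q - Pi.single i 1) * householder (Pi.single j 1),
    mem_specialOrthogonalGroup_iff.mpr ⟨mul_mem (householder_mem_orthogonalGroup hqi)
      (householder_mem_orthogonalGroup hj), ?_⟩, ?_⟩
  · rw [det_mul, det_householder hqi, det_householder hj]
    norm_num
  · have hij : Pi.single j 1 ⬝ᵥ (Pi.single i 1 : ι → ℝ) = 0 := by simp [hji]
    have hnorm : Pi.single i 1 ⬝ᵥ (Pi.single i 1 : ι → ℝ) = q ⬝ᵥ q := by simp [hq]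
    rw [← mulVec_mulVec, householder_mulVec_of_dotProduct_eq_zero hij,
      householder_sub_mulVec hnorm h]

end Householder

/-! ### Isometries of `ℝ² ⊕ ι` fixing a null vector -/

section BlockModel

variable {ι : Type*} [Fintype ι] {Q : Matrix ι ι ℝ}

def planeForm : Matrix (Fin 2) (Fin 2) ℝ := diagonal ![-1, 1]

def planeDual : Fin 2 → ℝ := ![-1, 1]

lemma planeForm_mulVec_one : planeForm *ᵥ 1 = planeDual := by
  ext p
  fin_cases p <;> simp [planeForm, planeDual]

lemma one_vecMul_planeForm : 1 ᵥ* planeForm = planeDual := by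
  ext p
  fin_cases p <;> simp [planeForm, planeDual, vecMul, dotProduct, diagonal]

lemma planeDual_dotProduct_one : planeDual ⬝ᵥ 1 = 0 := by simp [planeDual, dotProduct]

-- `Matrix.vecMulVec_zero` only covers two vectors over the same index type.
lemma vecMulVec_zero_right {m n : Type*} (w : m → ℝ) : vecMulVec w (0 : n → ℝ) = 0 :=
  ext fun _ _ => mul_zero _

lemma vecMulVec_mulVec_eq_smul {m n : Type*} [Fintype n] (u : m → ℝ) (v w : n → ℝ) :
    vecMulVec u v *ᵥ w = (v ⬝ᵥ w) • u := by
  rw [vecMulVec_mulVec, op_smul_eq_smul]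

def extendedForm (Q : Matrix ι ι ℝ) : Matrix (Fin 2 ⊕ ι) (Fin 2 ⊕ ι) ℝ :=
  fromBlocks planeForm 0 0 Q

def nullVector (ι : Type*) : Fin 2 ⊕ ι → ℝ := Sum.elim 1 0

lemma extendedForm_mulVec_nullVector :
    extendedForm Q *ᵥ nullVector ι = Sum.elim planeDual 0 := by
  simp only [extendedForm, nullVector, fromBlocks_mulVec, Sum.elim_comp_inl, Sum.elim_comp_inr,
    planeForm_mulVec_one, mulVec_zero, zero_mulVec, add_zero]

lemma eq_vecMulVec_planeDual_of_mulVec_one {m : Type*} {V : Matrix m (Fin 2) ℝ}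
    (hV : V *ᵥ 1 = 0) : V = vecMulVec (fun k => V k 1) planeDual := by
  ext k p
  have := congrFun hV k
  simp only [mulVec, dotProduct, Fin.sum_univ_two, Pi.one_apply, mul_one, Pi.zero_apply] at this
  fin_cases p
  · simp only [Fin.zero_eta, vecMulVec_apply, planeDual, cons_val_zero, mul_neg, mul_one]
    linarith
  · simp [vecMulVec_apply, planeDual]

lemma eq_vecMulVec_one_of_planeDual_vecMul {n : Type*} {C : Matrix (Fin 2) n ℝ}
    (hC : planeDual ᵥ* C = 0) : C = vecMulVec 1 (C 1) := by
  ext p k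
  have := congrFun hC k
  simp only [vecMul, dotProduct, Fin.sum_univ_two, planeDual, cons_val_zero, cons_val_one,
    cons_val_fin_one, neg_mul, one_mul, Pi.zero_apply] at this
  fin_cases p
  · simp only [Fin.zero_eta, vecMulVec_apply, Pi.one_apply, one_mul]
    linarith
  · simp [vecMulVec_apply]

lemma eq_one_sub_smul_of_mulVec_one {P : Matrix (Fin 2) (Fin 2) ℝ} (h₁ : P *ᵥ 1 = 1)
    (h₂ : planeDual ᵥ* P = planeDual) : P = 1 - P 1 0 • vecMulVec 1 planeDual := by
  have e₁ := congrFun h₁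
  have e₂ := congrFun h₂
  simp only [mulVec, vecMul, dotProduct, Fin.sum_univ_two, planeDual, Pi.one_apply,
    mul_one] at e₁ e₂
  have := e₁ 0; have := e₁ 1; have := e₂ 0; have := e₂ 1
  ext p q
  fin_cases p <;> fin_cases q <;> simp [planeDual] at * <;> linarith

lemma exists_eq_fromBlocks_of_mulVec_nullVector {M : Matrix (Fin 2 ⊕ ι) (Fin 2 ⊕ ι) ℝ}
    (hu : M *ᵥ nullVector ι = nullVector ι)
    (hw : Mᵀ *ᵥ Sum.elim planeDual 0 = Sum.elim planeDual 0) :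
    ∃ (t : ℝ) (c a : ι → ℝ), M = fromBlocks (1 - t • vecMulVec 1 planeDual) (vecMulVec 1 c)
      (vecMulVec a planeDual) M.toBlocks₂₂ := by
  rw [← fromBlocks_toBlocks M] at hu hw
  simp only [nullVector, fromBlocks_transpose, fromBlocks_mulVec, Sum.elim_comp_inl,
    Sum.elim_comp_inr, mulVec_zero, add_zero, Sum.elim_eq_iff, mulVec_transpose] at hu hw
  refine ⟨M.toBlocks₁₁ 1 0, M.toBlocks₁₂ 1, fun k => M.toBlocks₂₁ k 1, ?_⟩
  conv_lhs => rw [← fromBlocks_toBlocks M]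
  rw [← eq_one_sub_smul_of_mulVec_one hu.1 hw.1, ← eq_vecMulVec_one_of_planeDual_vecMul hw.2,
    ← eq_vecMulVec_planeDual_of_mulVec_one hu.2]

lemma eq_of_isometry_fromBlocks (hQ : Q.IsSymm) {t : ℝ} {c a : ι → ℝ} {B : Matrix ι ι ℝ}
    (h : (fromBlocks (1 - t • vecMulVec 1 planeDual) (vecMulVec 1 c) (vecMulVec a planeDual) B)ᵀ *
      extendedForm Q * fromBlocks (1 - t • vecMulVec 1 planeDual) (vecMulVec 1 c)
        (vecMulVec a planeDual) B = extendedForm Q) :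
    t = a ⬝ᵥ Q *ᵥ a / 2 ∧ c = -((Q *ᵥ a) ᵥ* B) ∧ Bᵀ * Q * B = Q := by
  have hQa : ∀ x, x ᵥ* Q = Q *ᵥ x := fun x => by rw [← mulVec_transpose, hQ.eq]
  simp only [extendedForm, fromBlocks_transpose, fromBlocks_multiply, Matrix.transpose_sub,
    Matrix.transpose_smul, Matrix.transpose_one, transpose_vecMulVec, Matrix.sub_mul,
    Matrix.mul_sub, Matrix.smul_mul, Matrix.mul_smul, Matrix.one_mul, Matrix.mul_one,
    Matrix.mul_zero, add_zero, zero_add, mul_vecMulVec, planeForm_mulVec_one,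
    planeDual_dotProduct_one, zero_smul, smul_zero, sub_zero, sub_mulVec, smul_mulVec,
    vecMulVec_mulVec_eq_smul, smul_vecMulVec, vecMulVec_mul, one_vecMul_planeForm, hQa,
    Matrix.mul_assoc, fromBlocks_inj] at h
  obtain ⟨h₁₁, h₁₂, -, h₂₂⟩ := h
  have hd : planeDual 1 = 1 := rfl
  refine ⟨?_, funext fun k => ?_, by simpa [Matrix.mul_assoc] using h₂₂⟩
  · have := congrFun₂ h₁₁ 1 1
    simp only [Matrix.add_apply, Matrix.sub_apply, Matrix.smul_apply, vecMulVec_apply, hd,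
      mul_one, smul_eq_mul, dotProduct_comm (Q *ᵥ a)] at this
    linarith
  · have := congrFun₂ h₁₂ 1 k
    simp only [Matrix.add_apply, vecMulVec_apply, hd, one_mul, Matrix.zero_apply] at this
    rw [Pi.neg_apply]
    linarith

lemma transpose_fromBlocks_one_mul_mul {B : Matrix ι ι ℝ} (hB : Bᵀ * Q * B = Q) :
    (fromBlocks 1 0 0 B)ᵀ * extendedForm Q * fromBlocks 1 0 0 B = extendedForm Q := by
  simp [extendedForm, fromBlocks_transpose, fromBlocks_multiply, hB]

lemma fromBlocks_one_mulVec_nullVector (B : Matrix ι ι ℝ) :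
    fromBlocks 1 0 0 B *ᵥ nullVector ι = nullVector ι := by
  simp [nullVector, fromBlocks_mulVec]

variable [DecidableEq ι]

/-- The null rotation `exp X = 1 + X + X² / 2`, where `X (e, x) = (-(Q *ᵥ a ⬝ᵥ x) • 1,
(planeDual ⬝ᵥ e) • a)` is nilpotent and skew for `extendedForm Q`; these realise the translations
of the Poincaré group. -/
noncomputable def translationMatrix (Q : Matrix ι ι ℝ) (a : ι → ℝ) :
    Matrix (Fin 2 ⊕ ι) (Fin 2 ⊕ ι) ℝ :=
  fromBlocks (1 - (a ⬝ᵥ Q *ᵥ a / 2) • vecMulVec 1 planeDual) (-vecMulVec 1 (Q *ᵥ a))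
    (vecMulVec a planeDual) 1

lemma translationMatrix_zero : translationMatrix Q 0 = 1 := by
  simp [translationMatrix, fromBlocks_one]

lemma translationMatrix_mul_translationMatrix (hQ : Q.IsSymm) (a b : ι → ℝ) :
    translationMatrix Q a * translationMatrix Q b = translationMatrix Q (a + b) := by
  have hab : b ⬝ᵥ Q *ᵥ a = a ⬝ᵥ Q *ᵥ b := by
    rw [dotProduct_mulVec, ← mulVec_transpose, hQ.eq, dotProduct_comm]
  have hab' : Q *ᵥ a ⬝ᵥ b = a ⬝ᵥ Q *ᵥ b := by rw [dotProduct_comm, hab]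
  simp only [translationMatrix, fromBlocks_multiply, Matrix.sub_mul, Matrix.mul_sub,
    Matrix.smul_mul, Matrix.mul_smul, Matrix.one_mul, Matrix.mul_one, Matrix.neg_mul,
    Matrix.mul_neg, vecMulVec_mul_vecMulVec, vecMulVec_zero_right, planeDual_dotProduct_one,
    zero_smul, smul_zero, sub_zero, neg_zero, zero_add, vecMulVec_smul, mulVec_add,
    dotProduct_add, add_dotProduct, vecMulVec_add, add_vecMulVec, hab, hab']
  congr 1
  · module
  · abel

lemma fromBlocks_one_mul_translationMatrix {B : Matrix ι ι ℝ} (hB : Bᵀ * Q * B = Q)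
    (a : ι → ℝ) :
    fromBlocks 1 0 0 B * translationMatrix Q a =
      translationMatrix Q (B *ᵥ a) * fromBlocks 1 0 0 B := by
  have hq : B *ᵥ a ⬝ᵥ Q *ᵥ (B *ᵥ a) = a ⬝ᵥ Q *ᵥ a := by
    rw [dotProduct_mulVec, dotProduct_mulVec, ← vecMul_transpose, vecMul_vecMul, vecMul_vecMul,
      ← Matrix.mul_assoc, hB, ← dotProduct_mulVec]
  have hc : (Q *ᵥ (B *ᵥ a)) ᵥ* B = Q *ᵥ a := by
    rw [← mulVec_transpose, mulVec_mulVec, mulVec_mulVec, hB]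
  simp only [translationMatrix, fromBlocks_multiply, Matrix.one_mul, Matrix.mul_one,
    Matrix.zero_mul, Matrix.mul_zero, add_zero, zero_add, mul_vecMulVec, Matrix.neg_mul,
    vecMulVec_mul, hq, hc, zero_mulVec, zero_vecMulVec]

lemma transpose_translationMatrix_mul_mul (hQ : Q.IsSymm) (a : ι → ℝ) :
    (translationMatrix Q a)ᵀ * extendedForm Q * translationMatrix Q a = extendedForm Q := by
  have hQa : ∀ x, x ᵥ* Q = Q *ᵥ x := fun x => by rw [← mulVec_transpose, hQ.eq]
  simp only [translationMatrix, extendedForm, fromBlocks_transpose, fromBlocks_multiply,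
    Matrix.transpose_sub, Matrix.transpose_smul, Matrix.transpose_one, transpose_vecMulVec,
    Matrix.transpose_neg, Matrix.sub_mul, Matrix.mul_sub, Matrix.smul_mul, Matrix.mul_smul,
    Matrix.one_mul, Matrix.mul_one, Matrix.neg_mul, Matrix.mul_neg, Matrix.mul_zero, add_zero,
    zero_add, mul_vecMulVec, planeForm_mulVec_one, planeDual_dotProduct_one, zero_smul, smul_zero,
    sub_zero, sub_mulVec, smul_mulVec, vecMulVec_mulVec_eq_smul, neg_mulVec, smul_vecMulVec,
    vecMulVec_mul, one_vecMul_planeForm, hQa, dotProduct_comm (Q *ᵥ a), zero_vecMulVec, neg_zero,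
    neg_add_cancel]
  congr 1
  module

lemma translationMatrix_mulVec_nullVector (a : ι → ℝ) :
    translationMatrix Q a *ᵥ nullVector ι = nullVector ι := by
  simp only [translationMatrix, nullVector, fromBlocks_mulVec, Sum.elim_comp_inl,
    Sum.elim_comp_inr, sub_mulVec, one_mulVec, smul_mulVec, vecMulVec_mulVec_eq_smul,
    planeDual_dotProduct_one, zero_smul, smul_zero, sub_zero, mulVec_zero, add_zero]

lemma det_translationMatrix (a : ι → ℝ) : (translationMatrix Q a).det = 1 := by
  rw [translationMatrix, det_fromBlocks_one₂₂, Matrix.neg_mul, vecMulVec_mul_vecMulVec,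
    sub_neg_eq_add]
  simp [det_fin_two, planeDual]
  ring

lemma det_translationMatrix_mul_fromBlocks (a : ι → ℝ) (B : Matrix ι ι ℝ) :
    (translationMatrix Q a * fromBlocks 1 0 0 B).det = B.det := by
  rw [det_mul, det_translationMatrix, det_fromBlocks_zero₂₁, det_one, one_mul, one_mul]

lemma translationMatrix_mul_fromBlocks_inj {a a' : ι → ℝ} {B B' : Matrix ι ι ℝ} :
    translationMatrix Q a * fromBlocks 1 0 0 B = translationMatrix Q a' * fromBlocks 1 0 0 B' ↔
      a = a' ∧ B = B' := by
  refine ⟨fun h => ?_, by rintro ⟨rfl, rfl⟩; rfl⟩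
  simp only [translationMatrix, fromBlocks_multiply, fromBlocks_inj, Matrix.mul_one,
    Matrix.mul_zero, Matrix.one_mul, add_zero, zero_add] at h
  refine ⟨funext fun k => ?_, h.2.2.2⟩
  simpa [vecMulVec_apply, planeDual] using congrFun₂ h.2.2.1 k 1

lemma exists_eq_translationMatrix_mul (hQ : Q.IsSymm) {M : Matrix (Fin 2 ⊕ ι) (Fin 2 ⊕ ι) ℝ}
    (hM : Mᵀ * extendedForm Q * M = extendedForm Q) (hu : M *ᵥ nullVector ι = nullVector ι) :
    M.toBlocks₂₂ᵀ * Q * M.toBlocks₂₂ = Q ∧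
      ∃ a, M = translationMatrix Q a * fromBlocks 1 0 0 M.toBlocks₂₂ := by
  have hw : Mᵀ *ᵥ Sum.elim planeDual 0 = Sum.elim planeDual 0 := by
    rw [← extendedForm_mulVec_nullVector (Q := Q)]
    conv_lhs => rw [← hu, mulVec_mulVec, mulVec_mulVec, hM]
  obtain ⟨t, c, a, hM'⟩ := exists_eq_fromBlocks_of_mulVec_nullVector hu hw
  rw [hM'] at hM
  obtain ⟨rfl, rfl, hB⟩ := eq_of_isometry_fromBlocks hQ hM
  refine ⟨hB, a, hM'.trans ?_⟩
  simp only [translationMatrix, fromBlocks_multiply, Matrix.mul_one, Matrix.mul_zero,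
    Matrix.one_mul, add_zero, zero_add, Matrix.neg_mul, vecMulVec_mul, vecMulVec_neg]

noncomputable def translationHom (hQ : Q.IsSymm) :
    Multiplicative (ι → ℝ) →* Matrix (Fin 2 ⊕ ι) (Fin 2 ⊕ ι) ℝ where
  toFun a := translationMatrix Q a.toAdd
  map_one' := translationMatrix_zero
  map_mul' _ _ := (translationMatrix_mul_translationMatrix hQ _ _).symm

def fromBlocksOneHom : Matrix ι ι ℝ →* Matrix (Fin 2 ⊕ ι) (Fin 2 ⊕ ι) ℝ where
  toFun B := fromBlocks 1 0 0 B
  map_one' := fromBlocks_one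
  map_mul' A B := by simp [fromBlocks_multiply]

end BlockModel

/-! ### Coordinates on `ℝ^(n+2)` -/

def splitEquiv (n : ℕ) : Fin (n + 2) ≃ Fin 2 ⊕ Fin n :=
  (finCongr (Nat.add_comm n 2)).trans finSumFinEquiv.symm

/-- Sends `e₀, e₂` to the hyperbolic plane `Fin 2` and `e₁, e₃, …, e_{n+1}` to `Fin n`, on which
`formSig 2 (n + 2)` restricts to `η = formSig 1 n`. -/
def planeEquiv (n : ℕ) [NeZero n] : Fin (n + 2) ≃ Fin 2 ⊕ Fin n :=
  (splitEquiv n).trans (Equiv.swap (Sum.inl 1) (Sum.inr 0))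

/-- The standard null vector `e₀ + e₂`. -/
def nullVec (n : ℕ) [NeZero n] : Fin (n + 2) → ℝ := nullVector (Fin n) ∘ planeEquiv n

lemma reindex_splitEquiv_signMatrix (n : ℕ) :
    reindex (splitEquiv n) (splitEquiv n) (signMatrix 2 (n + 2)) = fromBlocks (-1) 0 0 1 := by
  have hd : (fun i : Fin (n + 2) => if (i : ℕ) < 2 then (-1 : ℝ) else 1) ∘ (splitEquiv n).symm =
      Sum.elim (-1 : Fin 2 → ℝ) 1 := by
    funext s
    rcases s with p | j
    · simp [splitEquiv]
      omega
    · simp [splitEquiv]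
  rw [signMatrix, reindex_apply, submatrix_diagonal_equiv, hd, ← fromBlocks_diagonal]
  simp [← diagonal_one]

lemma reindex_planeEquiv_signMatrix (n : ℕ) [NeZero n] :
    reindex (planeEquiv n) (planeEquiv n) (signMatrix 2 (n + 2)) =
      extendedForm (signMatrix 1 n) := by
  rw [signMatrix, reindex_apply, submatrix_diagonal_equiv, extendedForm, signMatrix, planeForm,
    fromBlocks_diagonal]
  congr 1
  funext s
  simp only [planeEquiv, Equiv.symm_trans_apply, Equiv.symm_swap, Function.comp_apply]
  rcases s with p | j
  · fin_cases p <;> simp [Equiv.swap_apply_of_ne_of_ne, splitEquiv]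
  · rcases eq_or_ne j 0 with rfl | hj
    · simp [splitEquiv]
    · simp [Equiv.swap_apply_of_ne_of_ne, hj, splitEquiv]

lemma nullVec_comp_splitEquiv_symm (n : ℕ) [NeZero n] :
    nullVec n ∘ (splitEquiv n).symm = Sum.elim (Pi.single 0 1) (Pi.single 0 1) := by
  funext s
  simp only [nullVec, planeEquiv, Function.comp_apply, Equiv.trans_apply, Equiv.apply_symm_apply]
  rcases s with p | j
  · fin_cases p <;> simp [Equiv.swap_apply_of_ne_of_ne, nullVector]
  · rcases eq_or_ne j 0 with rfl | hj
    · simp [nullVector]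
    · simp [Equiv.swap_apply_of_ne_of_ne, hj, nullVector]

lemma formSig_two_eq (n : ℕ) (x y : Fin (n + 2) → ℝ) :
    formSig 2 (n + 2) x y =
      -((x ∘ (splitEquiv n).symm ∘ Sum.inl) ⬝ᵥ (y ∘ (splitEquiv n).symm ∘ Sum.inl)) +
        (x ∘ (splitEquiv n).symm ∘ Sum.inr) ⬝ᵥ (y ∘ (splitEquiv n).symm ∘ Sum.inr) := by
  rw [formSig, ← (splitEquiv n).symm.sum_comp, Fintype.sum_sum_type]
  simp [splitEquiv, dotProduct]
  ring

lemma exists_mem_specialIsometry_coe_eq_reindex_fromBlocks {n : ℕ}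
    {S : Matrix (Fin 2) (Fin 2) ℝ} {T : Matrix (Fin n) (Fin n) ℝ}
    (hS : S ∈ specialOrthogonalGroup (Fin 2) ℝ) (hT : T ∈ specialOrthogonalGroup (Fin n) ℝ) :
    ∃ g ∈ specialIsometry 2 (n + 2), (g : Matrix (Fin (n + 2)) (Fin (n + 2)) ℝ) =
      reindex (splitEquiv n).symm (splitEquiv n).symm (fromBlocks S 0 0 T) := by
  rw [mem_specialOrthogonalGroup_iff, mem_orthogonalGroup_iff'] at hS hT
  refine exists_mem_specialIsometry_coe_eq ?_ ?_
  · rw [det_reindex_self, det_fromBlocks_zero₂₁, hS.2, hT.2, one_mul]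
  · have hJ : signMatrix 2 (n + 2) =
        reindex (splitEquiv n).symm (splitEquiv n).symm (fromBlocks (-1) 0 0 1) := by
      rw [← reindex_splitEquiv_signMatrix, ← reindex_symm, Equiv.symm_apply_apply]
    rw [hJ, transpose_reindex_mul_mul, fromBlocks_transpose, fromBlocks_multiply,
      fromBlocks_multiply]
    simp [hS.1, hT.1]

lemma exists_mem_specialIsometry_mulVec_nullVec (n : ℕ) [NeZero n] [Nontrivial (Fin n)]
    {I : Fin (n + 2) → ℝ} (hI : I ≠ 0) (hII : formSig 2 (n + 2) I I = 0) :
    ∃ g ∈ specialIsometry 2 (n + 2), ∃ c : ℝ, c ≠ 0 ∧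
      (g : Matrix (Fin (n + 2)) (Fin (n + 2)) ℝ) *ᵥ nullVec n = c • I := by
  set p := I ∘ (splitEquiv n).symm ∘ Sum.inl
  set q := I ∘ (splitEquiv n).symm ∘ Sum.inr
  have hIpq : I ∘ (splitEquiv n).symm = Sum.elim p q := by
    funext s
    rcases s with _ | _ <;> rfl
  have hpq : p ⬝ᵥ p = q ⬝ᵥ q := by
    rw [formSig_two_eq] at hII
    linarith
  have hp : 0 < p ⬝ᵥ p := by
    refine (Finset.sum_nonneg fun i _ => mul_self_nonneg (p i)).lt_of_ne' fun h => hI ?_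
    have hp₀ : p = 0 := dotProduct_self_eq_zero.mp h
    have hq₀ : q = 0 := dotProduct_self_eq_zero.mp (hpq ▸ h)
    funext i
    simpa [hp₀, hq₀] using congrFun hIpq (splitEquiv n i)
  set r := √(p ⬝ᵥ p)
  have hr : r ≠ 0 := (Real.sqrt_pos.mpr hp).ne'
  have hunit {κ : Type} [Fintype κ] (v : κ → ℝ) (hv : v ⬝ᵥ v = p ⬝ᵥ p) :
      r⁻¹ • v ⬝ᵥ r⁻¹ • v = 1 := by
    rw [dotProduct_smul, smul_dotProduct, hv, smul_smul, smul_eq_mul, ← mul_inv,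
      Real.mul_self_sqrt hp.le, inv_mul_cancel₀ hp.ne']
  obtain ⟨S, hS, hSp⟩ := exists_mem_specialOrthogonalGroup_mulVec_single 0 (hunit p rfl)
  obtain ⟨T, hT, hTq⟩ := exists_mem_specialOrthogonalGroup_mulVec_single 0 (hunit q hpq.symm)
  obtain ⟨g, hg, hgM⟩ := exists_mem_specialIsometry_coe_eq_reindex_fromBlocks hS hT
  refine ⟨g, hg, r⁻¹, inv_ne_zero hr, ?_⟩
  rw [hgM, reindex_apply, Equiv.symm_symm, submatrix_mulVec_equiv, nullVec_comp_splitEquiv_symm,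
    fromBlocks_mulVec]
  simp only [Sum.elim_comp_inl, Sum.elim_comp_inr, zero_mulVec, add_zero, zero_add, hSp, hTq]
  funext i
  obtain ⟨s, rfl⟩ := (splitEquiv n).symm.surjective i
  rcases s with _ | _ <;> simp [p, q]

/-! ### The stabiliser of the standard null vector -/

noncomputable def poincareBlockHom (n : ℕ) :
    Multiplicative (Fin n → ℝ) ⋊[subgroupMulVecHom (specialIsometry 1 n)] specialIsometry 1 n →*
      (Matrix (Fin 2 ⊕ Fin n) (Fin 2 ⊕ Fin n) ℝ)ˣ :=
  SemidirectProduct.lift (translationHom (isSymm_signMatrix 1 n)).toHomUnits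
    (fromBlocksOneHom.comp ((Units.coeHom _).comp (specialIsometry 1 n).subtype)).toHomUnits
    fun B => by
      refine MonoidHom.ext fun a => ?_
      simp only [MonoidHom.comp_apply, MulEquiv.coe_toMonoidHom, MulAut.conj_apply]
      rw [eq_mul_inv_iff_mul_eq]
      exact Units.ext
        (fromBlocks_one_mul_translationMatrix (mem_specialIsometry_iff.mp B.2).2 _).symm

lemma coe_poincareBlockHom (n : ℕ)
    (x : Multiplicative (Fin n → ℝ) ⋊[subgroupMulVecHom (specialIsometry 1 n)]
      specialIsometry 1 n) :
    (poincareBlockHom n x : Matrix (Fin 2 ⊕ Fin n) (Fin 2 ⊕ Fin n) ℝ) =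
      translationMatrix (signMatrix 1 n) x.left.toAdd *
        fromBlocks 1 0 0 (x.right : (Matrix (Fin n) (Fin n) ℝ)ˣ) :=
  rfl

noncomputable def poincareHom (n : ℕ) [NeZero n] :
    Multiplicative (Fin n → ℝ) ⋊[subgroupMulVecHom (specialIsometry 1 n)] specialIsometry 1 n →*
      (Matrix (Fin (n + 2)) (Fin (n + 2)) ℝ)ˣ :=
  (Units.map (reindexAlgEquiv ℝ ℝ (planeEquiv n).symm : _ →* _)).comp (poincareBlockHom n)

lemma reindex_poincareHom (n : ℕ) [NeZero n]
    (x : Multiplicative (Fin n → ℝ) ⋊[subgroupMulVecHom (specialIsometry 1 n)]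
      specialIsometry 1 n) :
    reindex (planeEquiv n) (planeEquiv n)
        (poincareHom n x : Matrix (Fin (n + 2)) (Fin (n + 2)) ℝ) =
      translationMatrix (signMatrix 1 n) x.left.toAdd *
        fromBlocks 1 0 0 (x.right : (Matrix (Fin n) (Fin n) ℝ)ˣ) := by
  rw [← coe_poincareBlockHom]
  simp [poincareHom]

lemma mem_poincareGroup_nullVec_iff (n : ℕ) [NeZero n]
    {N : (Matrix (Fin (n + 2)) (Fin (n + 2)) ℝ)ˣ} :
    N ∈ poincareGroup n (nullVec n) ↔
      (reindex (planeEquiv n) (planeEquiv n) (N : Matrix (Fin (n + 2)) (Fin (n + 2)) ℝ)).det = 1 ∧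
      (reindex (planeEquiv n) (planeEquiv n) (N : Matrix (Fin (n + 2)) (Fin (n + 2)) ℝ))ᵀ *
          extendedForm (signMatrix 1 n) *
          reindex (planeEquiv n) (planeEquiv n) (N : Matrix (Fin (n + 2)) (Fin (n + 2)) ℝ) =
        extendedForm (signMatrix 1 n) ∧
      reindex (planeEquiv n) (planeEquiv n) (N : Matrix (Fin (n + 2)) (Fin (n + 2)) ℝ) *ᵥ
          nullVector (Fin n) = nullVector (Fin n) := by
  rw [poincareGroup, Subgroup.mem_inf, mem_specialIsometry_iff, det_reindex_self,
    ← reindex_planeEquiv_signMatrix, transpose_reindex_mul_mul, (reindex _ _).injective.eq_iff,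
    and_assoc]
  refine and_congr_right' (and_congr_right' ?_)
  rw [reindex_apply, submatrix_mulVec_equiv, Equiv.symm_symm, Equiv.comp_symm_eq]
  rfl

lemma poincareHom_injective (n : ℕ) [NeZero n] : Function.Injective (poincareHom n) := by
  intro x y h
  have hxy := reindex_poincareHom n x
  rw [h, reindex_poincareHom, eq_comm, translationMatrix_mul_fromBlocks_inj] at hxy
  exact SemidirectProduct.ext hxy.1 (Subtype.ext (Units.ext hxy.2))

lemma range_poincareHom (n : ℕ) [NeZero n] :
    (poincareHom n).range = poincareGroup n (nullVec n) := by
  ext N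
  rw [MonoidHom.mem_range, mem_poincareGroup_nullVec_iff]
  constructor
  · rintro ⟨x, rfl⟩
    rw [reindex_poincareHom]
    obtain ⟨hdet, hB⟩ := mem_specialIsometry_iff.mp x.right.2
    exact ⟨by rw [det_translationMatrix_mul_fromBlocks, hdet],
      isometry_mul (transpose_translationMatrix_mul_mul (isSymm_signMatrix 1 n) _)
        (transpose_fromBlocks_one_mul_mul hB),
      by rw [← mulVec_mulVec, fromBlocks_one_mulVec_nullVector,
        translationMatrix_mulVec_nullVector]⟩
  · rintro ⟨hdet, hM, hu⟩
    obtain ⟨hB, a, hMa⟩ := exists_eq_translationMatrix_mul (isSymm_signMatrix 1 n) hM hu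
    obtain ⟨B, hBmem, hBM⟩ := exists_mem_specialIsometry_coe_eq
      (by rwa [hMa, det_translationMatrix_mul_fromBlocks] at hdet) hB
    refine ⟨⟨Multiplicative.ofAdd a, ⟨B, hBmem⟩⟩,
      Units.ext ((reindex (planeEquiv n) (planeEquiv n)).injective ?_)⟩
    rw [reindex_poincareHom, hMa]
    simp [hBM]

noncomputable def poincareGroupNullVecEquiv (n : ℕ) [NeZero n] :
    Multiplicative (Fin n → ℝ) ⋊[subgroupMulVecHom (specialIsometry 1 n)] specialIsometry 1 n ≃*
      poincareGroup n (nullVec n) :=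
  (MonoidHom.ofInjective (poincareHom_injective n)).trans
    (MulEquiv.subgroupCongr (range_poincareHom n))

lemma conj_smul_vecStab {m : ℕ} (g : (Matrix (Fin m) (Fin m) ℝ)ˣ) (v : Fin m → ℝ) :
    MulAut.conj g • vecStab m v = vecStab m ((g : Matrix (Fin m) (Fin m) ℝ) *ᵥ v) := by
  ext A
  rw [Subgroup.mem_pointwise_smul_iff_inv_smul_mem, ← map_inv, MulAut.smul_def,
    MulAut.conj_apply, inv_inv]
  change ((g⁻¹ * A * g : (Matrix (Fin m) (Fin m) ℝ)ˣ) : Matrix (Fin m) (Fin m) ℝ) *ᵥ v = v ↔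
    (A : Matrix (Fin m) (Fin m) ℝ) *ᵥ ((g : Matrix (Fin m) (Fin m) ℝ) *ᵥ v) =
      (g : Matrix (Fin m) (Fin m) ℝ) *ᵥ v
  rw [Units.val_mul, Units.val_mul, ← mulVec_mulVec, ← mulVec_mulVec]
  constructor
  · intro h
    conv_lhs => rw [← one_mulVec (_ *ᵥ _), ← g.mul_inv, ← mulVec_mulVec, h]
  · intro h
    rw [h, mulVec_mulVec, g.inv_mul, one_mulVec]

lemma vecStab_smul {m : ℕ} {c : ℝ} (hc : c ≠ 0) (v : Fin m → ℝ) :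
    vecStab m (c • v) = vecStab m v := by
  ext A
  change _ *ᵥ (c • v) = c • v ↔ _
  rw [mulVec_smul, smul_right_inj hc]
  rfl

lemma conj_smul_poincareGroup {n : ℕ} {g : (Matrix (Fin (n + 2)) (Fin (n + 2)) ℝ)ˣ}
    (hg : g ∈ specialIsometry 2 (n + 2)) (v : Fin (n + 2) → ℝ) :
    MulAut.conj g • poincareGroup n v =
      poincareGroup n ((g : Matrix (Fin (n + 2)) (Fin (n + 2)) ℝ) *ᵥ v) := by
  rw [poincareGroup, Subgroup.smul_inf, Subgroup.conj_smul_eq_self_of_mem hg, conj_smul_vecStab]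
  rfl

end PoincareSubgroup

open PoincareSubgroup

/-- The Poincaré subgroup `G` is isomorphic, as a group, to the Poincaré group
`ISO(1,n-1)`, i.e. to the semidirect product of the (additive) translation group `ℝ^n`
by `SO(1,n-1) = {B : η(Bu,Bv) = η(u,v), det B = 1}` (where `η = formSig 1 n` is the
standard Minkowski form of signature `(1,n-1)` on `ℝ^n`), acting by matrix–vector
multiplication. -/
theorem poincare_subgroup_iso_iso_poincare_group
    (n : ℕ) (hn : 2 ≤ n) (I : Fin (n + 2) → ℝ) (hI : I ≠ 0)
    (hII : formSig 2 (n + 2) I I = 0) :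
    Nonempty ((↥(poincareGroup n I)) ≃*
      SemidirectProduct (Multiplicative (Fin n → ℝ)) (↥(specialIsometry 1 n))
        (subgroupMulVecHom (specialIsometry 1 n))) := by
  have : NeZero n := ⟨by omega⟩
  have : Nontrivial (Fin n) := Fin.nontrivial_iff_two_le.mpr hn
  obtain ⟨g, hg, c, hc, hgu⟩ := exists_mem_specialIsometry_mulVec_nullVec n hI hII
  have hconj : MulAut.conj g • poincareGroup n (nullVec n) = poincareGroup n I := by
    rw [conj_smul_poincareGroup hg, hgu, poincareGroup, vecStab_smul hc, ← poincareGroup]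
  exact ⟨(MulEquiv.subgroupCongr hconj.symm).trans
    ((Subgroup.equivSMul _ _).symm.trans (poincareGroupNullVecEquiv n).symm)⟩
end

section
/- The action of ℝ on X is proper: assuming in addition that X is Hausdorff, for every compact subset K ⊆ X the set {t ∈ ℝ : (t · K) ∩ K ≠ ∅} = {t ∈ ℝ : ∃ x ∈ K, t · x ∈ K} is a compact subset of ℝ. (This is the properness part of the proof of Theorem 3.4: if m ≤ l ≤ M on K then any t with (t·K) ∩ K ≠ ∅ satisfies |t| ≤ (M − m)/2, and the set is closed by continuity.) -/
/-- Properness of the flow: let `X` be a Hausdorff topological space with a continuous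
action `act` of the additive group `(ℝ,+)`, and let `l : X → ℝ` be a continuous function
with `l(t · x) = l(x) + 2t`.  Then for every compact `K ⊆ X`, the set
`{t : ℝ | (t · K) ∩ K ≠ ∅}` is compact. -/
theorem flow_action_is_proper {X : Type*} [TopologicalSpace X] [T2Space X]
    (act : ℝ → X → X)
    (hcont : Continuous fun p : ℝ × X => act p.1 p.2)
    (hzero : ∀ x : X, act 0 x = x)
    (hadd : ∀ (s t : ℝ) (x : X), act (s + t) x = act s (act t x))
    (l : X → ℝ) (hl : Continuous l)
    (hll : ∀ (t : ℝ) (x : X), l (act t x) = l x + 2 * t) :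
    ∀ K : Set X, IsCompact K → IsCompact {t : ℝ | ∃ x ∈ K, act t x ∈ K} := by
  intro K hK
  rcases K.eq_empty_or_nonempty with h | hne
  · subst h
    convert isCompact_empty
    simp
  -- min and max of l on K
  obtain ⟨a, haK, ha⟩ := hK.exists_isMinOn hne hl.continuousOn
  obtain ⟨b, hbK, hb⟩ := hK.exists_isMaxOn hne hl.continuousOn
  set m := l a with hm
  set M := l b with hM
  -- the compact "graph" set
  set T : Set (ℝ × X) := {p | p.2 ∈ K ∧ act p.1 p.2 ∈ K} with hT
  have hKcl : IsClosed K := hK.isClosed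
  have hTcl : IsClosed T := by
    apply IsClosed.inter
    · exact hKcl.preimage continuous_snd
    · exact hKcl.preimage hcont
  have hTsub : T ⊆ (Set.Icc ((m - M) / 2) ((M - m) / 2)) ×ˢ K := by
    rintro ⟨t, x⟩ ⟨hx, hax⟩
    have h1 : m ≤ l x := ha hx
    have h2 : l x ≤ M := hb hx
    have h3 : m ≤ l (act t x) := ha hax
    have h4 : l (act t x) ≤ M := hb hax
    rw [hll] at h3 h4
    constructor
    · constructor <;> dsimp <;> linarith
    · exact hx
  have : {t : ℝ | ∃ x ∈ K, act t x ∈ K} = Prod.fst '' T := by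
    ext t
    constructor
    · rintro ⟨x, hx, hax⟩; exact ⟨(t, x), ⟨hx, hax⟩, rfl⟩
    · rintro ⟨⟨s, x⟩, ⟨hx, hax⟩, rfl⟩; exact ⟨x, hx, hax⟩
  rw [this]
  refine IsCompact.image ?_ continuous_fst
  rw [show T = T ∩ (Set.Icc ((m - M) / 2) ((M - m) / 2)) ×ˢ K from
    (Set.inter_eq_self_of_subset_left hTsub).symm]
  exact (isCompact_Icc.prod hK).inter_left hTcl
end
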